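/- arXiv:2505.23737 — 3 statements merged into one kernel-verified Lean document; each statement's English description precedes it below -/
import Mathlib

section
/- For a symmetric positive definite matrix Λ ∈ ℝ^{n×n} and any matrix A ∈ ℝ^{m×n}, the nuclear norm of A satisfies ‖A‖_* ≤ sqrt(‖Λ‖_*) · ‖A‖_{Λ^{-1}}, where ‖A‖_{Λ^{-1}} = sqrt(trace(A Λ^{-1} A^T)). -/
open scoped BigOperators
open Matrix

/-- Nuclear norm of a real matrix: the sum of its singular values. -/
noncomputable def nucNorm {m n : ℕ} (A : Matrix (Fin m) (Fin n) ℝ) : ℝ :=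
  ∑ j, Real.sqrt ((Matrix.isHermitian_conjTranspose_mul_self A).eigenvalues j)

/-- The `Λ`-weighted norm `‖A‖_Λ = sqrt (trace (A Λ Aᵀ))`. -/
noncomputable def lamNorm {m n : ℕ} (Λ : Matrix (Fin n) (Fin n) ℝ)
    (A : Matrix (Fin m) (Fin n) ℝ) : ℝ :=
  Real.sqrt (A * Λ * Aᵀ).trace

/-!
Write `S = √(AᵀA)`, so that `‖A‖_* = tr S`, and factor `Λ = BᵀB` with `B` invertible.
Then `tr S = ⟪B, B⁻ᵀS⟫` in the Frobenius inner product, and Cauchy–Schwarz bounds it by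
`‖B‖_F ‖B⁻ᵀS‖_F = √(tr Λ) · √(tr (S Λ⁻¹ S))`, where `tr (S Λ⁻¹ S) = tr (A Λ⁻¹ Aᵀ)` because
`S² = AᵀA`. Finally `‖Λ‖_* = tr Λ` since `√(ΛᵀΛ) = Λ`.
-/

open scoped MatrixOrder ComplexOrder

namespace Matrix

lemma trace_transpose_mul_le {m n : Type*} [Fintype m] [Fintype n] (X Y : Matrix m n ℝ) :
    (Xᵀ * Y).trace ≤ √(Xᵀ * X).trace * √(Yᵀ * Y).trace := by
  simpa only [← vec_dotProduct_vec, dotProduct, sq] using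
    Real.sum_mul_le_sqrt_mul_sqrt Finset.univ X.vec Y.vec

variable {𝕜 n : Type*} [RCLike 𝕜] [Fintype n] [DecidableEq n]

lemma IsHermitian.trace_cfc {A : Matrix n n 𝕜} (hA : A.IsHermitian) (f : ℝ → ℝ) :
    (cfc f A).trace = ∑ i, (f (hA.eigenvalues i) : 𝕜) := by
  rw [hA.cfc_eq, IsHermitian.cfc, Unitary.conjStarAlgAut_apply, trace_mul_cycle,
    Unitary.coe_star_mul_self, one_mul, trace_diagonal]
  rfl

lemma PosSemidef.trace_sqrt {A : Matrix n n 𝕜} (hA : A.PosSemidef) :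
    (CFC.sqrt A).trace = ∑ i, (√(hA.1.eigenvalues i) : 𝕜) := by
  rw [CFC.sqrt_eq_real_sqrt A hA.nonneg, cfcₙ_eq_cfc, hA.1.trace_cfc]

lemma PosDef.trace_le_sqrt_trace_mul_sqrt_trace_inv {Λ : Matrix n n ℝ} (hΛ : Λ.PosDef)
    (X : Matrix n n ℝ) : X.trace ≤ √Λ.trace * √(Xᵀ * Λ⁻¹ * X).trace := by
  obtain ⟨B, hB, rfl⟩ :=
    CStarAlgebra.isStrictlyPositive_iff_eq_star_mul_self.mp hΛ.isStrictlyPositive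
  rw [star_eq_conjTranspose, conjTranspose_eq_transpose_of_trivial]
  have hX : Bᵀ * ((B⁻¹)ᵀ * X) = X := by
    rw [← Matrix.mul_assoc, ← transpose_mul, nonsing_inv_mul _ ((isUnit_iff_isUnit_det B).mp hB),
      transpose_one, one_mul]
  have hY : ((B⁻¹)ᵀ * X)ᵀ * ((B⁻¹)ᵀ * X) = Xᵀ * (Bᵀ * B)⁻¹ * X := by
    rw [mul_inv_rev, transpose_mul, transpose_transpose, transpose_nonsing_inv]
    simp only [Matrix.mul_assoc]
  simpa only [hX, hY] using trace_transpose_mul_le B ((B⁻¹)ᵀ * X)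

end Matrix

lemma nucNorm_eq_trace_sqrt {m n : ℕ} (A : Matrix (Fin m) (Fin n) ℝ) :
    nucNorm A = (CFC.sqrt (Aᵀ * A)).trace := by
  rw [← conjTranspose_eq_transpose_of_trivial, (posSemidef_conjTranspose_mul_self A).trace_sqrt]
  rfl

lemma Matrix.PosSemidef.nucNorm_eq_trace {n : ℕ} {Λ : Matrix (Fin n) (Fin n) ℝ}
    (hΛ : Λ.PosSemidef) : nucNorm Λ = Λ.trace := by
  rw [nucNorm_eq_trace_sqrt, ← conjTranspose_eq_transpose_of_trivial, hΛ.1.eq, ← sq,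
    CFC.sqrt_sq Λ hΛ.nonneg]

theorem nuclear_le_sqrt_nucLam_mul_lamInvNorm
    {m n : ℕ} (Λ : Matrix (Fin n) (Fin n) ℝ) (hΛ : Λ.PosDef)
    (A : Matrix (Fin m) (Fin n) ℝ) :
    nucNorm A ≤ Real.sqrt (nucNorm Λ) * lamNorm Λ⁻¹ A := by
  have hAA : (Aᵀ * A).PosSemidef := by
    simpa only [conjTranspose_eq_transpose_of_trivial] using posSemidef_conjTranspose_mul_self A
  set S := CFC.sqrt (Aᵀ * A)
  have hS : Sᵀ = S := (CFC.sqrt_nonneg (Aᵀ * A)).posSemidef.1.eq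
  have hSS : S * S = Aᵀ * A := CFC.sqrt_mul_sqrt_self _ hAA.nonneg
  have hweight : (Sᵀ * Λ⁻¹ * S).trace = (A * Λ⁻¹ * Aᵀ).trace := by
    rw [hS, trace_mul_cycle, hSS, ← trace_mul_cycle]
  rw [nucNorm_eq_trace_sqrt, hΛ.posSemidef.nucNorm_eq_trace, lamNorm, ← hweight]
  exact hΛ.trace_le_sqrt_trace_mul_sqrt_trace_inv S
end

section
/- Let f : ℝ^{m×n} → ℝ be twice continuously differentiable and let Λ ∈ ℝ^{n×n} be positive definite. Then f satisfies ‖∇f(W) − ∇f(W')‖_{Λ^{-1}} ≤ ‖W − W'‖_Λ for all W, W' if and only if for all w in ℝ^{mn}, the Hessian of the vectorized function satisfies −I_m ⊗ Λ ⪯ ∇²f_v(w) ⪯ I_m ⊗ Λ. -/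
open scoped BigOperators Kronecker
open Matrix

/-- Row-wise vectorization of a matrix. -/
def vecr {m n : ℕ} (A : Matrix (Fin m) (Fin n) ℝ) : Fin m × Fin n → ℝ :=
  fun p => A p.1 p.2

/-! With `K = I_m ⊗ Λ`, row-wise vectorization turns `‖A‖_Λ²` into `vecr A ⬝ K vecr A` and
`‖A‖_{Λ⁻¹}²` into `vecr A ⬝ K⁻¹ vecr A`, and these two norms are dual:
`|x ⬝ y| ≤ ‖x‖_{K⁻¹} ‖y‖_K`. If the gradient is 1-Lipschitz between them, differentiating
`t ↦ ∇f(W + tV) ⬝ V` at `0` bounds `|v ⬝ H v|` by `v ⬝ K v`. Conversely, `-K ⪯ H ⪯ K` gives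
`|u ⬝ H v| ≤ ‖u‖_K ‖v‖_K`, and the mean value theorem for `t ↦ ∇f(W' + t (W - W')) ⬝ u` with
`u = K⁻¹ (∇f W - ∇f W')` yields `‖∇f W - ∇f W'‖²_{K⁻¹} ≤ ‖∇f W - ∇f W'‖_{K⁻¹} ‖W - W'‖_Λ`. -/

theorem Real.sqrt_mul_sqrt_add_sqrt_mul_sqrt_le {a b c d : ℝ} (ha : 0 ≤ a) (hb : 0 ≤ b)
    (hc : 0 ≤ c) (hd : 0 ≤ d) : √a * √c + √b * √d ≤ √(a + b) * √(c + d) := by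
  simpa [Fin.sum_univ_two] using Real.sum_sqrt_mul_sqrt_le Finset.univ (f := ![a, b])
    (g := ![c, d]) (Fin.forall_fin_two.2 ⟨ha, hb⟩) (Fin.forall_fin_two.2 ⟨hc, hd⟩)

theorem hasDerivAt_along_line_of_forall_at_zero {E : Type*} [AddCommGroup E] [Module ℝ E]
    {F F' : E → ℝ} {x v : E}
    (h : ∀ y, HasDerivAt (fun s : ℝ => F (y + s • v)) (F' y) 0) (t : ℝ) :
    HasDerivAt (fun s : ℝ => F (x + s • v)) (F' (x + t • v)) t := by
  have h₀ : HasDerivAt (fun s : ℝ => F (x + t • v + s • v)) (F' (x + t • v)) (t - t) := by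
    rw [sub_self]; exact h _
  simpa [add_assoc, ← add_smul] using h₀.comp_sub_const t t

namespace Matrix

variable {ι : Type*} [Fintype ι]

theorem PosSemidef.abs_dotProduct_mulVec_le {M : Matrix ι ι ℝ} (hM : M.PosSemidef)
    (u v : ι → ℝ) : |u ⬝ᵥ M *ᵥ v| ≤ √(u ⬝ᵥ M *ᵥ u) * √(v ⬝ᵥ M *ᵥ v) := by
  let := M.toSeminormedAddCommGroup hM
  let := M.toInnerProductSpace hM
  have inner_eq (x y : ι → ℝ) : inner ℝ x y = x ⬝ᵥ M *ᵥ y := dotProduct_comm _ _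
  have h := abs_real_inner_le_norm u v
  rwa [norm_eq_sqrt_re_inner (𝕜 := ℝ) u, norm_eq_sqrt_re_inner (𝕜 := ℝ) v, RCLike.re_to_real,
    RCLike.re_to_real, inner_eq, inner_eq, inner_eq] at h

theorem PosSemidef.dotProduct_mulVec_self_nonneg {M : Matrix ι ι ℝ} (hM : M.PosSemidef)
    (x : ι → ℝ) : 0 ≤ x ⬝ᵥ M *ᵥ x := by
  simpa using hM.dotProduct_mulVec_nonneg x

theorem PosDef.abs_dotProduct_le [DecidableEq ι] {K : Matrix ι ι ℝ} (hK : K.PosDef)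
    (x y : ι → ℝ) : |x ⬝ᵥ y| ≤ √(x ⬝ᵥ K⁻¹ *ᵥ x) * √(y ⬝ᵥ K *ᵥ y) := by
  have hKy : K⁻¹ *ᵥ (K *ᵥ y) = y := by
    rw [mulVec_mulVec, nonsing_inv_mul _ ((isUnit_iff_isUnit_det K).1 hK.isUnit), one_mulVec]
  simpa [hKy, dotProduct_comm (K *ᵥ y)] using
    hK.inv.posSemidef.abs_dotProduct_mulVec_le x (K *ᵥ y)

theorem abs_dotProduct_mulVec_le_of_posSemidef_sub_of_posSemidef_add {H K : Matrix ι ι ℝ}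
    (h₁ : (K - H).PosSemidef) (h₂ : (H + K).PosSemidef) (u v : ι → ℝ) :
    |u ⬝ᵥ H *ᵥ v| ≤ √(u ⬝ᵥ K *ᵥ u) * √(v ⬝ᵥ K *ᵥ v) := by
  have h_sum (x : ι → ℝ) : x ⬝ᵥ (H + K) *ᵥ x + x ⬝ᵥ (K - H) *ᵥ x = 2 * (x ⬝ᵥ K *ᵥ x) := by
    simp only [add_mulVec, sub_mulVec, dotProduct_add, dotProduct_sub]; ring
  have h_sqrt_two (x : ι → ℝ) : √(2 * (x ⬝ᵥ K *ᵥ x)) = √2 * √(x ⬝ᵥ K *ᵥ x) :=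
    Real.sqrt_mul zero_le_two _
  calc |u ⬝ᵥ H *ᵥ v| = |u ⬝ᵥ (H + K) *ᵥ v - u ⬝ᵥ (K - H) *ᵥ v| / 2 := by
        simp only [add_mulVec, sub_mulVec, dotProduct_add, dotProduct_sub]
        rw [show ∀ a b : ℝ, a + b - (b - a) = 2 * a by intros; ring, abs_mul, abs_two]; ring
    _ ≤ (|u ⬝ᵥ (H + K) *ᵥ v| + |u ⬝ᵥ (K - H) *ᵥ v|) / 2 := by gcongr; exact abs_sub _ _
    _ ≤ (√(u ⬝ᵥ (H + K) *ᵥ u) * √(v ⬝ᵥ (H + K) *ᵥ v)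
          + √(u ⬝ᵥ (K - H) *ᵥ u) * √(v ⬝ᵥ (K - H) *ᵥ v)) / 2 := by
        gcongr
        exacts [h₂.abs_dotProduct_mulVec_le u v, h₁.abs_dotProduct_mulVec_le u v]
    _ ≤ √(2 * (u ⬝ᵥ K *ᵥ u)) * √(2 * (v ⬝ᵥ K *ᵥ v)) / 2 := by
        rw [← h_sum, ← h_sum]
        gcongr
        apply Real.sqrt_mul_sqrt_add_sqrt_mul_sqrt_le <;>
          apply PosSemidef.dotProduct_mulVec_self_nonneg <;> assumption
    _ = √(u ⬝ᵥ K *ᵥ u) * √(v ⬝ᵥ K *ᵥ v) := by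
        rw [h_sqrt_two, h_sqrt_two, mul_mul_mul_comm, Real.mul_self_sqrt zero_le_two]; ring

theorem posSemidef_sub_and_posSemidef_add_of_abs_le {H K : Matrix ι ι ℝ} (hH : H.IsSymm)
    (hK : K.IsSymm) (h : ∀ v, |v ⬝ᵥ H *ᵥ v| ≤ v ⬝ᵥ K *ᵥ v) :
    (K - H).PosSemidef ∧ (H + K).PosSemidef := by
  rw [← isHermitian_iff_isSymm] at hH hK
  refine ⟨.of_dotProduct_mulVec_nonneg (hK.sub hH) fun v => ?_,
    .of_dotProduct_mulVec_nonneg (hH.add hK) fun v => ?_⟩ <;>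
  · have := abs_le.1 (h v)
    simp only [star_trivial, sub_mulVec, add_mulVec, dotProduct_sub, dotProduct_add]
    linarith

end Matrix

section Curve

variable {ι : Type*} [Fintype ι] [DecidableEq ι] {K : Matrix ι ι ℝ}

theorem abs_le_of_hasDerivAt_dotProduct_of_lipschitz (hK : K.PosDef) {φ : ℝ → ι → ℝ}
    {v : ι → ℝ} {d : ℝ} (hφ : HasDerivAt (fun t => φ t ⬝ᵥ v) d 0)
    (hlip : ∀ t, √((φ t - φ 0) ⬝ᵥ K⁻¹ *ᵥ (φ t - φ 0)) ≤ √((t • v) ⬝ᵥ K *ᵥ (t • v))) :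
    |d| ≤ v ⬝ᵥ K *ᵥ v := by
  have hv := hK.posSemidef.dotProduct_mulVec_self_nonneg v
  simpa using hφ.le_of_lip' hv <| .of_forall fun t => calc
    ‖φ t ⬝ᵥ v - φ 0 ⬝ᵥ v‖ = |(φ t - φ 0) ⬝ᵥ v| := by rw [sub_dotProduct, Real.norm_eq_abs]
    _ ≤ √((φ t - φ 0) ⬝ᵥ K⁻¹ *ᵥ (φ t - φ 0)) * √(v ⬝ᵥ K *ᵥ v) := hK.abs_dotProduct_le _ _
    _ ≤ √((t • v) ⬝ᵥ K *ᵥ (t • v)) * √(v ⬝ᵥ K *ᵥ v) :=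
      mul_le_mul_of_nonneg_right (hlip t) (Real.sqrt_nonneg _)
    _ = (v ⬝ᵥ K *ᵥ v) * ‖t - 0‖ := by
      rw [mulVec_smul, smul_dotProduct, dotProduct_smul, smul_eq_mul, smul_eq_mul, ← mul_assoc,
        Real.sqrt_mul (mul_self_nonneg t), Real.sqrt_mul_self_eq_abs, mul_assoc,
        Real.mul_self_sqrt hv, sub_zero, Real.norm_eq_abs, mul_comm]

theorem sqrt_dotProduct_inv_mulVec_sub_le_of_hasDerivAt (hK : K.PosDef) {φ : ℝ → ι → ℝ}
    {B : ℝ → Matrix ι ι ℝ} {δ : ι → ℝ}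
    (hφ : ∀ u t, HasDerivAt (fun s => φ s ⬝ᵥ u) (u ⬝ᵥ B t *ᵥ δ) t)
    (hB : ∀ t, (K - B t).PosSemidef ∧ (B t + K).PosSemidef) :
    √((φ 1 - φ 0) ⬝ᵥ K⁻¹ *ᵥ (φ 1 - φ 0)) ≤ √(δ ⬝ᵥ K *ᵥ δ) := by
  set g := φ 1 - φ 0
  set u := K⁻¹ *ᵥ g
  have hu : u ⬝ᵥ K *ᵥ u = g ⬝ᵥ K⁻¹ *ᵥ g := by
    rw [mulVec_mulVec, mul_nonsing_inv _ ((isUnit_iff_isUnit_det K).1 hK.isUnit), one_mulVec,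
      dotProduct_comm]
  obtain ⟨c, -, hc⟩ := exists_hasDerivAt_eq_slope (fun s => φ s ⬝ᵥ u)
    (fun t => u ⬝ᵥ B t *ᵥ δ) zero_lt_one
    (fun t _ => (hφ u t).continuousAt.continuousWithinAt) (fun t _ => hφ u t)
  rw [sub_zero, div_one, ← sub_dotProduct] at hc
  have h_sq : g ⬝ᵥ K⁻¹ *ᵥ g ≤ √(g ⬝ᵥ K⁻¹ *ᵥ g) * √(δ ⬝ᵥ K *ᵥ δ) := calc
    g ⬝ᵥ K⁻¹ *ᵥ g = u ⬝ᵥ B c *ᵥ δ := by rw [hc, dotProduct_comm]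
    _ ≤ |u ⬝ᵥ B c *ᵥ δ| := le_abs_self _
    _ ≤ √(u ⬝ᵥ K *ᵥ u) * √(δ ⬝ᵥ K *ᵥ δ) :=
      abs_dotProduct_mulVec_le_of_posSemidef_sub_of_posSemidef_add (hB c).1 (hB c).2 _ _
    _ = √(g ⬝ᵥ K⁻¹ *ᵥ g) * √(δ ⬝ᵥ K *ᵥ δ) := by rw [hu]
  have ha := hK.inv.posSemidef.dotProduct_mulVec_self_nonneg g
  nlinarith [Real.mul_self_sqrt ha, Real.sqrt_nonneg (g ⬝ᵥ K⁻¹ *ᵥ g),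
    Real.sqrt_nonneg (δ ⬝ᵥ K *ᵥ δ)]

end Curve

theorem vecr_eq_vec_transpose {m n : ℕ} (A : Matrix (Fin m) (Fin n) ℝ) : vecr A = vec Aᵀ := rfl

theorem vecr_sub {m n : ℕ} (A B : Matrix (Fin m) (Fin n) ℝ) : vecr (A - B) = vecr A - vecr B :=
  rfl

theorem vecr_smul {m n : ℕ} (t : ℝ) (A : Matrix (Fin m) (Fin n) ℝ) : vecr (t • A) = t • vecr A :=
  rfl

theorem sum_sum_mul_eq_vecr_dotProduct {m n : ℕ} (A B : Matrix (Fin m) (Fin n) ℝ) :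
    ∑ i, ∑ j, A i j * B i j = vecr A ⬝ᵥ vecr B :=
  (Fintype.sum_prod_type fun p => A p.1 p.2 * B p.1 p.2).symm

theorem lamNorm_eq_sqrt_vecr_dotProduct {m n : ℕ} (Λ : Matrix (Fin n) (Fin n) ℝ)
    (A : Matrix (Fin m) (Fin n) ℝ) :
    lamNorm Λ A = √(vecr A ⬝ᵥ ((1 : Matrix (Fin m) (Fin m) ℝ) ⊗ₖ Λ) *ᵥ vecr A) := by
  rw [lamNorm, vecr_eq_vec_transpose, kronecker_mulVec_vec, vec_dotProduct_vec, transpose_one,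
    Matrix.mul_one, transpose_transpose, Matrix.mul_assoc]

theorem lamSmooth_iff_hessian_kronecker_bounds_general
    {m n : ℕ} (Λ : Matrix (Fin n) (Fin n) ℝ) (hΛ : Λ.PosDef)
    (gradf : Matrix (Fin m) (Fin n) ℝ → Matrix (Fin m) (Fin n) ℝ)
    (Hess : Matrix (Fin m) (Fin n) ℝ →
      Matrix (Fin m × Fin n) (Fin m × Fin n) ℝ)
    (hhess : ∀ W U V : Matrix (Fin m) (Fin n) ℝ,
      HasDerivAt (fun t : ℝ => ∑ i, ∑ j, gradf (W + t • V) i j * U i j)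
        (vecr U ⬝ᵥ (Hess W *ᵥ vecr V)) 0)
    (hsymm : ∀ W, (Hess W)ᵀ = Hess W) :
    (∀ W W' : Matrix (Fin m) (Fin n) ℝ,
        lamNorm Λ⁻¹ (gradf W - gradf W') ≤ lamNorm Λ (W - W')) ↔
    (∀ W : Matrix (Fin m) (Fin n) ℝ,
        (((1 : Matrix (Fin m) (Fin m) ℝ) ⊗ₖ Λ) - Hess W).PosSemidef ∧
        (Hess W + ((1 : Matrix (Fin m) (Fin m) ℝ) ⊗ₖ Λ)).PosSemidef) := by
  set K := (1 : Matrix (Fin m) (Fin m) ℝ) ⊗ₖ Λ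
  have hK : K.PosDef := PosDef.one.kronecker hΛ
  have hnorm_inv (A : Matrix (Fin m) (Fin n) ℝ) :
      lamNorm Λ⁻¹ A = √(vecr A ⬝ᵥ K⁻¹ *ᵥ vecr A) := by
    rw [lamNorm_eq_sqrt_vecr_dotProduct, inv_kronecker, inv_one]
  have hderiv (W : Matrix (Fin m) (Fin n) ℝ) (u : Fin m × Fin n → ℝ)
      (V : Matrix (Fin m) (Fin n) ℝ) :
      HasDerivAt (fun t : ℝ => vecr (gradf (W + t • V)) ⬝ᵥ u) (u ⬝ᵥ Hess W *ᵥ vecr V) 0 := by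
    have h := hhess W (of (Function.curry u)) V
    simp only [sum_sum_mul_eq_vecr_dotProduct] at h
    exact h
  constructor
  · intro hL W
    refine posSemidef_sub_and_posSemidef_add_of_abs_le (hsymm W)
      (isHermitian_iff_isSymm.1 hK.isHermitian) fun v => ?_
    obtain ⟨V, rfl⟩ : ∃ V, vecr V = v := ⟨of (Function.curry v), rfl⟩
    refine abs_le_of_hasDerivAt_dotProduct_of_lipschitz hK (hderiv W _ V) fun t => ?_
    simpa [hnorm_inv, lamNorm_eq_sqrt_vecr_dotProduct, vecr_sub, vecr_smul] using hL (W + t • V) W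
  · intro hB W W'
    have := sqrt_dotProduct_inv_mulVec_sub_le_of_hasDerivAt hK
      (φ := fun t => vecr (gradf (W' + t • (W - W'))))
      (B := fun t => Hess (W' + t • (W - W'))) (δ := vecr (W - W'))
      (fun u => hasDerivAt_along_line_of_forall_at_zero (F := fun X => vecr (gradf X) ⬝ᵥ u)
        (F' := fun X => u ⬝ᵥ Hess X *ᵥ vecr (W - W')) (hderiv · u (W - W'))) fun t => hB _
    simpa [hnorm_inv, lamNorm_eq_sqrt_vecr_dotProduct, vecr_sub] using this

/-- For a twice continuously differentiable `f` with gradient `gradf` and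
(symmetric) Hessian `Hess` of the row-wise vectorized function, the
1-Λ-norm Lipschitz smoothness condition holds iff the Hessian satisfies
`−I_m ⊗ Λ ⪯ ∇²f_v(w) ⪯ I_m ⊗ Λ` everywhere (Loewner order). -/
theorem lamSmooth_iff_hessian_kronecker_bounds
    {m n : ℕ} (Λ : Matrix (Fin n) (Fin n) ℝ) (hΛ : Λ.PosDef)
    (f : Matrix (Fin m) (Fin n) ℝ → ℝ)
    (gradf : Matrix (Fin m) (Fin n) ℝ → Matrix (Fin m) (Fin n) ℝ)
    (Hess : Matrix (Fin m) (Fin n) ℝ →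
      Matrix (Fin m × Fin n) (Fin m × Fin n) ℝ)
    (hgrad : ∀ W V : Matrix (Fin m) (Fin n) ℝ,
      HasDerivAt (fun t : ℝ => f (W + t • V)) (∑ i, ∑ j, gradf W i j * V i j) 0)
    (hhess : ∀ W U V : Matrix (Fin m) (Fin n) ℝ,
      HasDerivAt (fun t : ℝ => ∑ i, ∑ j, gradf (W + t • V) i j * U i j)
        (vecr U ⬝ᵥ (Hess W *ᵥ vecr V)) 0)
    (hsymm : ∀ W, (Hess W)ᵀ = Hess W)
    (hcont : Continuous Hess) :
    (∀ W W' : Matrix (Fin m) (Fin n) ℝ,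
        lamNorm Λ⁻¹ (gradf W - gradf W') ≤ lamNorm Λ (W - W')) ↔
    (∀ W : Matrix (Fin m) (Fin n) ℝ,
        (((1 : Matrix (Fin m) (Fin m) ℝ) ⊗ₖ Λ) - Hess W).PosSemidef ∧
        (Hess W + ((1 : Matrix (Fin m) (Fin m) ℝ) ⊗ₖ Λ)).PosSemidef) :=
  lamSmooth_iff_hessian_kronecker_bounds_general Λ hΛ gradf Hess hhess hsymm
end

section
/- Suppose f : ℝ^{m×n} → ℝ satisfies: (i) the star-convexity condition ⟨∇f(W), W − W*⟩ ≥ f(W) − f* for all W where W* is a minimizer and f* = f(W*); and (ii) ‖W − W*‖_op ≤ D_op at all iterates. If for each iterate f(W_{t+1}) ≤ f(W_t) − η‖∇f(W_t)‖_* + (L_* η²)/2 and 0 < η ≤ D_op, then after T steps: f(W_T) − f* ≤ (1 − η/D_op)^T (f(W_0) − f*) + L_* D_op η / 2. -/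
open scoped BigOperators
open Matrix

/-- Spectral (operator) norm of a real matrix: the largest singular value. -/
noncomputable def specNorm {m n : ℕ} (A : Matrix (Fin m) (Fin n) ℝ) : ℝ :=
  Real.sqrt (⨆ j, (Matrix.isHermitian_conjTranspose_mul_self A).eigenvalues j)

/-!
Star-convexity and the duality `⟨G, Δ⟩ ≤ ‖G‖_* ‖Δ‖_op` give `‖∇f(W_t)‖_* ≥ (f(W_t) - f*) / D_op`,
so the descent inequality becomes the contraction `e_{t+1} ≤ (1 - η/D_op) e_t + L_* η² / 2` for the
gap `e_t = f(W_t) - f*`, whose fixed point is `L_* D_op η / 2`. The duality follows by evaluating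
the Frobenius pairing of `A` and `B` column by column after multiplying both by an orthonormal
eigenbasis `V` of `AᵀA`: the columns of `A V` have norms `σ_j(A)`, those of `B V` at most `‖B‖_op`.
-/

namespace Matrix

variable {m n : Type*} [Fintype m] [Fintype n]

theorem mulVec_dotProduct_mulVec {R : Type*} [CommSemiring R] (A : Matrix m n R) (x y : n → R) :
    (A *ᵥ x) ⬝ᵥ (A *ᵥ y) = x ⬝ᵥ ((Aᵀ * A) *ᵥ y) := by
  rw [← mulVec_mulVec, dotProduct_mulVec x, vecMul_transpose]

theorem sum_mul_mul_of_mul_transpose_eq_one {R : Type*} [CommSemiring R] [DecidableEq n]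
    (A B : Matrix m n R) {V : Matrix n n R} (hV : V * Vᵀ = 1) :
    ∑ i, ∑ j, (A * V) i j * (B * V) i j = ∑ i, ∑ j, A i j * B i j := by
  have h_trace (A B : Matrix m n R) : ∑ i, ∑ j, A i j * B i j = trace (A * Bᵀ) := by
    simp [trace, mul_apply]
  rw [h_trace, h_trace, transpose_mul, Matrix.mul_assoc, ← Matrix.mul_assoc V, hV,
    Matrix.one_mul]

variable [DecidableEq n]

theorem unitaryGroup_coe_mul_transpose {R : Type*} [CommRing R] [StarRing R] [TrivialStar R]
    (U : unitaryGroup n R) : (U : Matrix n n R) * (U : Matrix n n R)ᵀ = 1 := by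
  simpa [star_eq_conjTranspose] using Unitary.coe_mul_star_self U

theorem unitaryGroup_transpose_mul_coe {R : Type*} [CommRing R] [StarRing R] [TrivialStar R]
    (U : unitaryGroup n R) : (U : Matrix n n R)ᵀ * (U : Matrix n n R) = 1 := by
  simpa [star_eq_conjTranspose] using Unitary.coe_star_mul_self U

theorem mul_eigenvectorUnitary_conjTranspose_mul_self {𝕜 : Type*} [RCLike 𝕜] (A : Matrix m n 𝕜) :
    (A * ((isHermitian_conjTranspose_mul_self A).eigenvectorUnitary : Matrix n n 𝕜))ᴴ *
        (A * ((isHermitian_conjTranspose_mul_self A).eigenvectorUnitary : Matrix n n 𝕜)) =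
      diagonal (RCLike.ofReal ∘ (isHermitian_conjTranspose_mul_self A).eigenvalues) := by
  rw [← (isHermitian_conjTranspose_mul_self A).conjStarAlgAut_star_eigenvectorUnitary,
    Unitary.conjStarAlgAut_star_apply, conjTranspose_mul, ← star_eq_conjTranspose]
  simp only [Matrix.mul_assoc]

theorem sum_sq_mul_eigenvectorUnitary (A : Matrix m n ℝ) (k : n) :
    ∑ i, (A * ((isHermitian_conjTranspose_mul_self A).eigenvectorUnitary : Matrix n n ℝ)) i k ^ 2 =
      (isHermitian_conjTranspose_mul_self A).eigenvalues k := by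
  have := congrFun (congrFun (mul_eigenvectorUnitary_conjTranspose_mul_self A) k) k
  rw [mul_apply] at this
  simpa [sq] using this

theorem dotProduct_mulVec_self_le_iSup_eigenvalues (B : Matrix m n ℝ) (x : n → ℝ) :
    (B *ᵥ x) ⬝ᵥ (B *ᵥ x) ≤
      (⨆ k, (isHermitian_conjTranspose_mul_self B).eigenvalues k) * (x ⬝ᵥ x) := by
  set μ := (isHermitian_conjTranspose_mul_self B).eigenvalues
  set U : Matrix n n ℝ := ((isHermitian_conjTranspose_mul_self B).eigenvectorUnitary : Matrix n n ℝ)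
  set u := Uᵀ *ᵥ x
  have hU : U * Uᵀ = 1 := unitaryGroup_coe_mul_transpose _
  have hx : x = U *ᵥ u := by simp [u, mulVec_mulVec, hU]
  have hnorm : x ⬝ᵥ x = u ⬝ᵥ u := by
    rw [mulVec_dotProduct_mulVec, transpose_transpose, hU, one_mulVec]
  have hquad : (B *ᵥ x) ⬝ᵥ (B *ᵥ x) = ∑ k, μ k * (u k * u k) := by
    rw [hx, mulVec_mulVec, mulVec_dotProduct_mulVec, ← conjTranspose_eq_transpose_of_trivial,
      mul_eigenvectorUnitary_conjTranspose_mul_self]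
    simp only [dotProduct, mulVec_diagonal]
    exact Finset.sum_congr rfl fun k _ => by simp [μ]; ring
  have hbdd : BddAbove (Set.range μ) := (Set.finite_range μ).bddAbove
  rw [hquad, hnorm, dotProduct, Finset.mul_sum]
  exact Finset.sum_le_sum fun k _ =>
    mul_le_mul_of_nonneg_right (le_ciSup hbdd k) (mul_self_nonneg _)

end Matrix

theorem nucNorm_nonneg {m n : ℕ} (A : Matrix (Fin m) (Fin n) ℝ) : 0 ≤ nucNorm A :=
  Finset.sum_nonneg fun _ _ => Real.sqrt_nonneg _

theorem sum_mul_le_nucNorm_mul_specNorm {m n : ℕ} (A B : Matrix (Fin m) (Fin n) ℝ) :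
    ∑ i, ∑ j, A i j * B i j ≤ nucNorm A * specNorm B := by
  set V : Matrix (Fin n) (Fin n) ℝ :=
    ((isHermitian_conjTranspose_mul_self A).eigenvectorUnitary : Matrix (Fin n) (Fin n) ℝ)
  have hcol (j : Fin n) : √(∑ i, (B * V) i j ^ 2) ≤ specNorm B := by
    have hVt : Vᵀ * V = 1 := unitaryGroup_transpose_mul_coe _
    have hunit : V.col j ⬝ᵥ V.col j = 1 := by
      simpa [mul_apply, dotProduct] using congrFun (congrFun hVt j) j
    have h := dotProduct_mulVec_self_le_iSup_eigenvalues B (V.col j)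
    rw [hunit, mul_one] at h
    refine Real.sqrt_le_sqrt (le_of_eq_of_le ?_ h)
    simp only [sq, dotProduct]
    rfl
  calc ∑ i, ∑ j, A i j * B i j
      = ∑ j, ∑ i, (A * V) i j * (B * V) i j := by
        rw [← sum_mul_mul_of_mul_transpose_eq_one A B (unitaryGroup_coe_mul_transpose _),
          Finset.sum_comm]
    _ ≤ ∑ j, √(∑ i, (A * V) i j ^ 2) * √(∑ i, (B * V) i j ^ 2) :=
        Finset.sum_le_sum fun j _ => Real.sum_mul_le_sqrt_mul_sqrt _ _ _
    _ ≤ ∑ j, √((isHermitian_conjTranspose_mul_self A).eigenvalues j) * specNorm B := by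
        gcongr with j
        · exact (sum_sq_mul_eigenvectorUnitary A j).le
        · exact hcol j
    _ = nucNorm A * specNorm B := by rw [nucNorm, Finset.sum_mul]

theorem le_one_sub_pow_mul_add_of_le_one_sub_mul_add {e : ℕ → ℝ} {r c : ℝ} (hr : r ≤ 1)
    (h : ∀ t, e (t + 1) ≤ (1 - r) * e t + r * c) (T : ℕ) :
    e T ≤ (1 - r) ^ T * e 0 + (1 - (1 - r) ^ T) * c := by
  induction T with
  | zero => simp
  | succ T ih =>
    calc e (T + 1) ≤ (1 - r) * e T + r * c := h T
      _ ≤ (1 - r) * ((1 - r) ^ T * e 0 + (1 - (1 - r) ^ T) * c) + r * c := by gcongr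
      _ = (1 - r) ^ (T + 1) * e 0 + (1 - (1 - r) ^ (T + 1)) * c := by ring

theorem muon_star_convex_linear_convergence_general
    {m n : ℕ} (f : Matrix (Fin m) (Fin n) ℝ → ℝ)
    (gradf : Matrix (Fin m) (Fin n) ℝ → Matrix (Fin m) (Fin n) ℝ)
    (Wstar : Matrix (Fin m) (Fin n) ℝ)
    (hstar : ∀ W : Matrix (Fin m) (Fin n) ℝ,
      f W - f Wstar ≤ ∑ i, ∑ j, gradf W i j * (W - Wstar) i j)
    (W : ℕ → Matrix (Fin m) (Fin n) ℝ)
    (Dop : ℝ) (hD : ∀ t, specNorm (W t - Wstar) ≤ Dop)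
    (Lstar : ℝ) (hL : 0 ≤ Lstar)
    (η : ℝ) (hη0 : 0 < η) (hηD : η ≤ Dop)
    (hdesc : ∀ t, f (W (t + 1)) ≤
      f (W t) - η * nucNorm (gradf (W t)) + Lstar * η ^ 2 / 2)
    (T : ℕ) :
    f (W T) - f Wstar ≤
      (1 - η / Dop) ^ T * (f (W 0) - f Wstar) + Lstar * Dop * η / 2 := by
  have hDop : 0 < Dop := hη0.trans_le hηD
  have hratio : η / Dop ≤ 1 := (div_le_one hDop).mpr hηD
  have hgap (t : ℕ) : f (W t) - f Wstar ≤ nucNorm (gradf (W t)) * Dop :=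
    (hstar (W t)).trans <| (sum_mul_le_nucNorm_mul_specNorm _ _).trans <|
      mul_le_mul_of_nonneg_left (hD t) (nucNorm_nonneg _)
  have hstep (t : ℕ) : f (W (t + 1)) - f Wstar ≤
      (1 - η / Dop) * (f (W t) - f Wstar) + η / Dop * (Lstar * Dop * η / 2) := by
    have hdecrease : η / Dop * (f (W t) - f Wstar) ≤ η * nucNorm (gradf (W t)) :=
      calc η / Dop * (f (W t) - f Wstar) ≤ η / Dop * (nucNorm (gradf (W t)) * Dop) := by
            gcongr; exact hgap t
        _ = η * nucNorm (gradf (W t)) := by field_simp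
    have hconst : η / Dop * (Lstar * Dop * η / 2) = Lstar * η ^ 2 / 2 := by field_simp
    linarith [hdesc t]
  have hgeom := le_one_sub_pow_mul_add_of_le_one_sub_mul_add (e := fun t => f (W t) - f Wstar)
    hratio hstep T
  have hq : 0 ≤ 1 - η / Dop := sub_nonneg.mpr hratio
  have htail : 0 ≤ (1 - η / Dop) ^ T * (Lstar * Dop * η / 2) := by positivity
  linarith

/-- Linear convergence of Muon with constant stepsize under star-convexity,
a spectral-norm bound on the iterates, and the per-step descent property. -/
theorem muon_star_convex_linear_convergence
    {m n : ℕ} (f : Matrix (Fin m) (Fin n) ℝ → ℝ)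
    (gradf : Matrix (Fin m) (Fin n) ℝ → Matrix (Fin m) (Fin n) ℝ)
    (Wstar : Matrix (Fin m) (Fin n) ℝ)
    (hmin : ∀ W, f Wstar ≤ f W)
    (hstar : ∀ W : Matrix (Fin m) (Fin n) ℝ,
      f W - f Wstar ≤ ∑ i, ∑ j, gradf W i j * (W - Wstar) i j)
    (W : ℕ → Matrix (Fin m) (Fin n) ℝ)
    (Dop : ℝ) (hD : ∀ t, specNorm (W t - Wstar) ≤ Dop)
    (Lstar : ℝ) (hL : 0 ≤ Lstar)
    (η : ℝ) (hη0 : 0 < η) (hηD : η ≤ Dop)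
    (hdesc : ∀ t, f (W (t + 1)) ≤
      f (W t) - η * nucNorm (gradf (W t)) + Lstar * η ^ 2 / 2)
    (T : ℕ) :
    f (W T) - f Wstar ≤
      (1 - η / Dop) ^ T * (f (W 0) - f Wstar) + Lstar * Dop * η / 2 :=
  muon_star_convex_linear_convergence_general f gradf Wstar hstar W Dop hD Lstar hL η hη0 hηD hdesc
    T
end
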